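/- arXiv:1410.5140 — 6 statements merged into one kernel-verified Lean document; each statement's English description precedes it below -/
import Mathlib

section
/- If A is an n×n complex matrix whose Hermitian real part Re A = (A + A*)/2 is positive definite, then A is invertible and (Re A)^{-1} ≥ Re(A^{-1}) in the Loewner (positive semidefinite) order. -/
open Matrix ComplexOrder

/-- The Hermitian real part `(A + Aᴴ)/2` of a complex matrix. -/
noncomputable def matRe {n : ℕ} (A : Matrix (Fin n) (Fin n) ℂ) : Matrix (Fin n) (Fin n) ℂ :=
  (1 / 2 : ℂ) • (A + Aᴴ)

/-!
If `v ≠ 0` and `A v = 0` then `v* (A + Aᴴ) v = 0`, so a positive definite real part forces `A` to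
be invertible. Writing `H = Re A`, the congruence `A⁻¹ (A + Aᴴ) A⁻ᴴ = A⁻¹ + A⁻ᴴ` shows
`A⁻¹ H A⁻ᴴ = Re A⁻¹`, and expanding gives
`H⁻¹ - Re A⁻¹ = (H⁻¹ - A⁻¹) H (H⁻¹ - A⁻¹)ᴴ`, which is positive semidefinite because `H` is.
-/

namespace Matrix

variable {m : Type*} [Fintype m] [DecidableEq m]

theorem isUnit_of_posDef_add_conjTranspose {𝕜 : Type*} [RCLike 𝕜] {A : Matrix m m 𝕜}
    (h : (A + Aᴴ).PosDef) : IsUnit A := by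
  rw [isUnit_iff_isUnit_det, isUnit_iff_ne_zero]
  intro hdet
  obtain ⟨v, hv, hAv⟩ := exists_mulVec_eq_zero_iff.2 hdet
  have hquad : star v ⬝ᵥ ((A + Aᴴ) *ᵥ v) = 0 := by
    rw [add_mulVec, dotProduct_add, hAv, dotProduct_mulVec, ← star_mulVec, hAv]
    simp
  exact (h.dotProduct_mulVec_pos hv).ne' hquad

theorem inv_mul_add_conjTranspose_mul_conjTranspose_inv {R : Type*} [CommRing R] [StarRing R]
    {A : Matrix m m R} (hA : IsUnit A) : A⁻¹ * (A + Aᴴ) * A⁻¹ᴴ = A⁻¹ + A⁻¹ᴴ := by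
  have hdet : IsUnit A.det := (isUnit_iff_isUnit_det A).1 hA
  rw [mul_add, add_mul, nonsing_inv_mul A hdet, one_mul, Matrix.mul_assoc, ← conjTranspose_mul,
    nonsing_inv_mul A hdet, conjTranspose_one, Matrix.mul_one, add_comm]

end Matrix

section

variable {n : ℕ}

theorem two_smul_matRe (A : Matrix (Fin n) (Fin n) ℂ) : (2 : ℂ) • matRe A = A + Aᴴ := by
  rw [matRe, smul_smul]
  norm_num

theorem isHermitian_matRe (A : Matrix (Fin n) (Fin n) ℂ) : (matRe A).IsHermitian := by
  rw [IsHermitian, matRe, conjTranspose_smul, conjTranspose_add, conjTranspose_conjTranspose,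
    add_comm]
  norm_num

theorem isUnit_of_posDef_matRe {A : Matrix (Fin n) (Fin n) ℂ} (hA : (matRe A).PosDef) :
    IsUnit A :=
  isUnit_of_posDef_add_conjTranspose (two_smul_matRe A ▸ hA.smul two_pos)

theorem inv_mul_matRe_mul_conjTranspose_inv {A : Matrix (Fin n) (Fin n) ℂ} (hA : IsUnit A) :
    A⁻¹ * matRe A * A⁻¹ᴴ = matRe A⁻¹ := by
  rw [matRe, matRe, Matrix.mul_smul, Matrix.smul_mul,
    inv_mul_add_conjTranspose_mul_conjTranspose_inv hA]

theorem inv_matRe_sub_matRe_inv {A : Matrix (Fin n) (Fin n) ℂ} (hA : IsUnit A)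
    (hH : IsUnit (matRe A)) :
    (matRe A)⁻¹ - matRe A⁻¹ = ((matRe A)⁻¹ - A⁻¹) * matRe A * ((matRe A)⁻¹ - A⁻¹)ᴴ := by
  have hdet : IsUnit (matRe A).det := (isUnit_iff_isUnit_det _).1 hH
  calc (matRe A)⁻¹ - matRe A⁻¹ = (matRe A)⁻¹ - (A⁻¹ + A⁻¹ᴴ) + matRe A⁻¹ := by
        rw [← two_smul_matRe]; module
    _ = (1 - A⁻¹ * matRe A) * ((matRe A)⁻¹ - A⁻¹ᴴ) := by
        rw [sub_mul, mul_sub, mul_sub, Matrix.one_mul, Matrix.one_mul, Matrix.mul_assoc A⁻¹,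
          mul_nonsing_inv _ hdet, Matrix.mul_one, inv_mul_matRe_mul_conjTranspose_inv hA]
        abel
    _ = ((matRe A)⁻¹ - A⁻¹) * matRe A * ((matRe A)⁻¹ - A⁻¹)ᴴ := by
        rw [sub_mul (matRe A)⁻¹, nonsing_inv_mul _ hdet, conjTranspose_sub,
          (isHermitian_matRe A).inv]

end

theorem inv_re_ge_re_inv {n : ℕ} (A : Matrix (Fin n) (Fin n) ℂ)
    (hA : (matRe A).PosDef) :
    IsUnit A ∧ ((matRe A)⁻¹ - matRe A⁻¹).PosSemidef := by
  have hAunit := isUnit_of_posDef_matRe hA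
  refine ⟨hAunit, ?_⟩
  rw [inv_matRe_sub_matRe_inv hAunit hA.isUnit]
  exact hA.posSemidef.mul_mul_conjTranspose_same _
end

section
/- If A is an n×n complex matrix with Re A positive definite, then Re(A^{-1}) = (Re A + (Im A)(Re A)^{-1}(Im A))^{-1}. -/
open Matrix ComplexOrder

/-- The Hermitian imaginary part `(A - Aᴴ)/(2i)` of a complex matrix. -/
noncomputable def matIm {n : ℕ} (A : Matrix (Fin n) (Fin n) ℂ) : Matrix (Fin n) (Fin n) ℂ :=
  (2 * Complex.I)⁻¹ • (A - Aᴴ)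

/-!
Write `A = R + iM` with `R = Re A`, `M = Im A`, so that `Aᴴ = R - iM`. Expanding,
`Aᴴ R⁻¹ A = R + M R⁻¹ M`, while `A⁻¹ R Aᴴ⁻¹ = (Aᴴ⁻¹ + A⁻¹)/2 = Re (A⁻¹)`; inverting the first
identity gives the second. `A` is invertible because a kernel vector `v` of `A` (hence of
`Aᴴ` in the form `vᴴ Aᴴ = 0`) satisfies `vᴴ (Re A) v = 0`.
-/

section

variable {ι : Type*} [Fintype ι] [DecidableEq ι]

theorem conj_mul_inv_mul_eq {R M : Matrix ι ι ℂ} (hR : IsUnit R.det) :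
    (R - Complex.I • M) * R⁻¹ * (R + Complex.I • M) = R + M * R⁻¹ * M := by
  simp only [sub_mul, mul_add, smul_mul, Matrix.mul_smul, smul_smul, Complex.I_mul_I,
    Matrix.mul_assoc, mul_nonsing_inv _ hR, nonsing_inv_mul _ hR, Matrix.mul_one, Matrix.one_mul]
  module

end

section

variable {n : ℕ}

theorem matRe_add_I_smul_matIm (A : Matrix (Fin n) (Fin n) ℂ) :
    matRe A + Complex.I • matIm A = A := by
  have hI : Complex.I * (2 * Complex.I)⁻¹ = 1 / 2 := by field_simp
  rw [matRe, matIm, smul_smul, hI]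
  module

theorem matRe_sub_I_smul_matIm (A : Matrix (Fin n) (Fin n) ℂ) :
    matRe A - Complex.I • matIm A = Aᴴ := by
  have hI : Complex.I * (2 * Complex.I)⁻¹ = 1 / 2 := by field_simp
  rw [matRe, matIm, smul_smul, hI]
  module

theorem matRe_inv {A : Matrix (Fin n) (Fin n) ℂ} (hA : IsUnit A.det) :
    matRe A⁻¹ = A⁻¹ * matRe A * Aᴴ⁻¹ := by
  have hAH : IsUnit Aᴴ.det := by simpa [det_conjTranspose] using hA.star
  rw [matRe, matRe, conjTranspose_nonsing_inv, Matrix.mul_smul, Matrix.smul_mul, Matrix.mul_add,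
    Matrix.add_mul, nonsing_inv_mul _ hA, Matrix.one_mul, mul_nonsing_inv_cancel_right _ _ hAH,
    add_comm]

theorem dotProduct_matRe_mulVec_eq_zero {A : Matrix (Fin n) (Fin n) ℂ} {v : Fin n → ℂ}
    (hv : A *ᵥ v = 0) : star v ⬝ᵥ matRe A *ᵥ v = 0 := by
  have hAH : star v ⬝ᵥ Aᴴ *ᵥ v = 0 := by
    rw [dotProduct_mulVec, ← star_mulVec, hv, star_zero, zero_dotProduct]
  simp [matRe, add_mulVec, smul_mulVec, hv, hAH]

theorem isUnit_det_of_posDef_matRe {A : Matrix (Fin n) (Fin n) ℂ} (hA : (matRe A).PosDef) :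
    IsUnit A.det := by
  rw [isUnit_iff_ne_zero]
  intro h
  obtain ⟨v, hv, hAv⟩ := exists_mulVec_eq_zero_iff.2 h
  exact (hA.dotProduct_mulVec_pos hv).ne' (dotProduct_matRe_mulVec_eq_zero hAv)

end

theorem re_inv_eq {n : ℕ} (A : Matrix (Fin n) (Fin n) ℂ)
    (hA : (matRe A).PosDef) :
    matRe A⁻¹ = (matRe A + matIm A * (matRe A)⁻¹ * matIm A)⁻¹ := by
  have hdetA := isUnit_det_of_posDef_matRe hA
  have hdetR : IsUnit (matRe A).det := isUnit_iff_ne_zero.2 hA.det_pos.ne'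
  rw [← conj_mul_inv_mul_eq hdetR, matRe_sub_I_smul_matIm, matRe_add_I_smul_matIm,
    Matrix.mul_inv_rev, Matrix.mul_inv_rev, nonsing_inv_nonsing_inv _ hdetR, ← Matrix.mul_assoc,
    matRe_inv hdetA]
end

section
/- Let A, B be n×n positive definite matrices conformally partitioned into 2×2 blocks with square diagonal blocks. Then (A+B)/(A_{11}+B_{11}) ≥ A/A_{11} + B/B_{11} in the Loewner order, where X/X_{11} denotes the Schur complement X_{22} − X_{21} X_{11}^{-1} X_{12}. -/
open Matrix ComplexOrder

/-- The Schur complement `A/A₁₁ = A₂₂ - A₂₁ A₁₁⁻¹ A₁₂` of the (1,1) block. -/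
noncomputable def schur {p q : ℕ} (A : Matrix (Fin p ⊕ Fin q) (Fin p ⊕ Fin q) ℂ) :
    Matrix (Fin q) (Fin q) ℂ :=
  A.toBlocks₂₂ - A.toBlocks₂₁ * (A.toBlocks₁₁)⁻¹ * A.toBlocks₁₂

/-!
Writing `S(M)` for the Schur complement of the (1,1) block, the quadratic form of `M` at
`(y, x)` is `(y + M₁₁⁻¹ M₁₂ x)ᴴ M₁₁ (y + M₁₁⁻¹ M₁₂ x) + xᴴ S(M) x`, so `xᴴ S(M) x` is the minimum
of `y ↦ (y, x)ᴴ M (y, x)`, attained at `y = -M₁₁⁻¹ M₁₂ x`. Evaluating the forms of `A` and `B` at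
the minimiser for `A + B` gives `xᴴ S(A) x + xᴴ S(B) x ≤ xᴴ S(A + B) x`.
-/

namespace Matrix

variable {m n : Type*}

theorem IsHermitian.toBlocks₂₁_eq {α : Type*} [InvolutiveStar α]
    {M : Matrix (m ⊕ n) (m ⊕ n) α} (hM : M.IsHermitian) :
    M.toBlocks₂₁ = M.toBlocks₁₂ᴴ := by
  rw [← fromBlocks_toBlocks M, isHermitian_fromBlocks_iff] at hM
  exact hM.2.1.symm

theorem IsHermitian.toBlocks₁₁ {α : Type*} [Star α] {M : Matrix (m ⊕ n) (m ⊕ n) α}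
    (hM : M.IsHermitian) : M.toBlocks₁₁.IsHermitian :=
  hM.submatrix Sum.inl

theorem PosDef.toBlocks₁₁ {R : Type*} [Ring R] [PartialOrder R] [StarRing R]
    {M : Matrix (m ⊕ n) (m ⊕ n) R} (hM : M.PosDef) :
    M.toBlocks₁₁.PosDef :=
  hM.submatrix Sum.inl_injective

variable [Fintype m] [DecidableEq m]

noncomputable def schurComplement₁₁ {R : Type*} [CommRing R]
    (M : Matrix (m ⊕ n) (m ⊕ n) R) : Matrix n n R :=
  M.toBlocks₂₂ - M.toBlocks₂₁ * M.toBlocks₁₁⁻¹ * M.toBlocks₁₂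

section CommRing

variable {R : Type*} [CommRing R] [StarRing R] {M : Matrix (m ⊕ n) (m ⊕ n) R}

theorem IsHermitian.schurComplement₁₁ (hM : M.IsHermitian) :
    M.schurComplement₁₁.IsHermitian := by
  have hM' := hM
  rw [← fromBlocks_toBlocks M, hM.toBlocks₂₁_eq,
    IsHermitian.fromBlocks₁₁ _ _ hM.toBlocks₁₁] at hM'
  rwa [Matrix.schurComplement₁₁, hM.toBlocks₂₁_eq]

theorem IsHermitian.dotProduct_mulVec_sumElim [Fintype n] (hM : M.IsHermitian)
    [Invertible M.toBlocks₁₁] (y : m → R) (x : n → R) :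
    star (y ⊕ᵥ x) ⬝ᵥ M *ᵥ (y ⊕ᵥ x) =
      star (y + (M.toBlocks₁₁⁻¹ * M.toBlocks₁₂) *ᵥ x) ⬝ᵥ
          M.toBlocks₁₁ *ᵥ (y + (M.toBlocks₁₁⁻¹ * M.toBlocks₁₂) *ᵥ x) +
        star x ⬝ᵥ M.schurComplement₁₁ *ᵥ x := by
  conv_lhs => rw [← fromBlocks_toBlocks M, hM.toBlocks₂₁_eq]
  rw [Matrix.schurComplement₁₁, hM.toBlocks₂₁_eq, dotProduct_mulVec,
    schur_complement_eq₁₁ _ _ _ _ hM.toBlocks₁₁, ← dotProduct_mulVec, ← dotProduct_mulVec]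

end CommRing

section Field

variable [Fintype n] {K : Type*} [Field K] [PartialOrder K] [StarRing K]
  {M : Matrix (m ⊕ n) (m ⊕ n) K}

theorem PosDef.dotProduct_schurComplement₁₁_mulVec_eq (hM : M.PosDef) (x : n → K) :
    star x ⬝ᵥ M.schurComplement₁₁ *ᵥ x =
      star (-((M.toBlocks₁₁⁻¹ * M.toBlocks₁₂) *ᵥ x) ⊕ᵥ x) ⬝ᵥ
        M *ᵥ (-((M.toBlocks₁₁⁻¹ * M.toBlocks₁₂) *ᵥ x) ⊕ᵥ x) := by
  have := hM.toBlocks₁₁.isUnit.invertible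
  rw [hM.isHermitian.dotProduct_mulVec_sumElim, neg_add_cancel, mulVec_zero, dotProduct_zero,
    zero_add]

variable [StarOrderedRing K]

theorem PosDef.dotProduct_schurComplement₁₁_mulVec_le (hM : M.PosDef) (y : m → K) (x : n → K) :
    star x ⬝ᵥ M.schurComplement₁₁ *ᵥ x ≤ star (y ⊕ᵥ x) ⬝ᵥ M *ᵥ (y ⊕ᵥ x) := by
  have := hM.toBlocks₁₁.isUnit.invertible
  rw [hM.isHermitian.dotProduct_mulVec_sumElim]
  exact le_add_of_nonneg_left (hM.toBlocks₁₁.posSemidef.dotProduct_mulVec_nonneg _)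

theorem PosDef.posSemidef_schurComplement₁₁_add_sub {A B : Matrix (m ⊕ n) (m ⊕ n) K}
    (hA : A.PosDef) (hB : B.PosDef) :
    ((A + B).schurComplement₁₁ - (A.schurComplement₁₁ + B.schurComplement₁₁)).PosSemidef := by
  refine .of_dotProduct_mulVec_nonneg ((hA.add hB).isHermitian.schurComplement₁₁.sub
    (hA.isHermitian.schurComplement₁₁.add hB.isHermitian.schurComplement₁₁)) fun x => ?_
  set z := -(((A + B).toBlocks₁₁⁻¹ * (A + B).toBlocks₁₂) *ᵥ x) ⊕ᵥ x
  have hle : star x ⬝ᵥ A.schurComplement₁₁ *ᵥ x + star x ⬝ᵥ B.schurComplement₁₁ *ᵥ x ≤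
      star x ⬝ᵥ (A + B).schurComplement₁₁ *ᵥ x :=
    calc _ ≤ star z ⬝ᵥ A *ᵥ z + star z ⬝ᵥ B *ᵥ z :=
          add_le_add (hA.dotProduct_schurComplement₁₁_mulVec_le _ x)
            (hB.dotProduct_schurComplement₁₁_mulVec_le _ x)
      _ = star z ⬝ᵥ (A + B) *ᵥ z := by rw [add_mulVec, dotProduct_add]
      _ = _ := ((hA.add hB).dotProduct_schurComplement₁₁_mulVec_eq x).symm
  simpa only [sub_mulVec, add_mulVec, dotProduct_sub, dotProduct_add] using sub_nonneg.mpr hle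

end Field

end Matrix

theorem schur_add_ge {p q : ℕ} (A B : Matrix (Fin p ⊕ Fin q) (Fin p ⊕ Fin q) ℂ)
    (hA : A.PosDef) (hB : B.PosDef) :
    (schur (A + B) - (schur A + schur B)).PosSemidef :=
  hA.posSemidef_schurComplement₁₁_add_sub hB
end

section
/- Let α ∈ [0, π/2) and let A be an n×n complex matrix with W(A) ⊆ S_α, partitioned into 2×2 blocks with A_{11} square. Then A_{11} is invertible and the Schur complement A/A_{11} = A_{22} − A_{21} A_{11}^{-1} A_{12} satisfies W(A/A_{11}) ⊆ S_α. -/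
/-!
Every principal submatrix inherits the hypothesis, since its quadratic form is that of `A` at a
vector supported on its indices; a matrix whose numerical range avoids `0` is invertible. For the
Schur complement, the quadratic form of `A` at `(-A₁₁⁻¹ A₁₂ y, y)` equals that of `A/A₁₁` at `y`,
and since `S_α` is a cone, normalising this vector to a unit one lands its value in `W(A) ⊆ S_α`.
-/

open Matrix

/-- The numerical range (field of values) of a complex matrix. -/
def numericalRange {m : Type*} [Fintype m] (A : Matrix m m ℂ) : Set ℂ :=
  {z | ∃ x : m → ℂ, star x ⬝ᵥ x = 1 ∧ z = star x ⬝ᵥ A.mulVec x}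

/-- The sector `S_α` of half-angle `α` around the positive real axis. -/
def sector (α : ℝ) : Set ℂ :=
  {z | 0 < z.re ∧ |z.im| ≤ z.re * Real.tan α}

open scoped ComplexOrder

lemma mem_sector_of_mul_mem {α : ℝ} {c z : ℂ} (hc : 0 < c) (h : c * z ∈ sector α) :
    z ∈ sector α := by
  obtain ⟨hre, him⟩ := Complex.pos_iff.mp hc
  obtain ⟨h1, h2⟩ := h
  simp only [Complex.mul_re, Complex.mul_im, ← him, zero_mul, sub_zero, add_zero] at h1 h2
  refine ⟨pos_of_mul_pos_right h1 hre.le, ?_⟩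
  rw [abs_mul, abs_of_pos hre, mul_assoc] at h2
  exact le_of_mul_le_mul_left h2 hre

section NumericalRange

variable {m : Type*} [Fintype m]

lemma inv_dotProduct_mul_dotProduct_mulVec_mem_numericalRange (A : Matrix m m ℂ) {x : m → ℂ}
    (hx : x ≠ 0) : (star x ⬝ᵥ x)⁻¹ * (star x ⬝ᵥ A *ᵥ x) ∈ numericalRange A := by
  set d := star x ⬝ᵥ x
  have hd : 0 < d := dotProduct_star_self_pos_iff.mpr hx
  obtain ⟨hre, him⟩ := Complex.pos_iff.mp hd
  set c : ℂ := (((√d.re)⁻¹ : ℝ) : ℂ)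
  have hc : star c * c = d⁻¹ := by
    have hd_real : d = (d.re : ℂ) := Complex.ext rfl him.symm
    rw [hd_real, Complex.star_def, Complex.conj_ofReal, ← Complex.ofReal_mul, ← Complex.ofReal_inv,
      ← mul_inv, Real.mul_self_sqrt hre.le]
  refine ⟨c • x, ?_, ?_⟩
  · rw [star_smul, smul_dotProduct, dotProduct_smul, smul_eq_mul, smul_eq_mul, ← mul_assoc, hc,
      inv_mul_cancel₀ hd.ne']
  · rw [star_smul, smul_dotProduct, mulVec_smul, dotProduct_smul, smul_eq_mul, smul_eq_mul,
      ← mul_assoc, hc]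

lemma dotProduct_mulVec_mem_sector {α : ℝ} {A : Matrix m m ℂ} (hA : numericalRange A ⊆ sector α)
    {x : m → ℂ} (hx : x ≠ 0) : star x ⬝ᵥ A *ᵥ x ∈ sector α :=
  mem_sector_of_mul_mem (inv_pos.mpr (dotProduct_star_self_pos_iff.mpr hx))
    (hA (inv_dotProduct_mul_dotProduct_mulVec_mem_numericalRange A hx))

lemma isUnit_of_numericalRange_subset_sector [DecidableEq m] {α : ℝ} {A : Matrix m m ℂ}
    (hA : numericalRange A ⊆ sector α) : IsUnit A := by
  rw [isUnit_iff_isUnit_det, isUnit_iff_ne_zero]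
  intro hdet
  obtain ⟨x, hx, hAx⟩ := exists_mulVec_eq_zero_iff.mpr hdet
  simpa [hAx] using (dotProduct_mulVec_mem_sector hA hx).1

end NumericalRange

section Blocks

variable {l n : Type*} [Fintype l] [Fintype n]

lemma star_sumElim_dotProduct_fromBlocks_mulVec (A : Matrix l l ℂ) (B : Matrix l n ℂ)
    (C : Matrix n l ℂ) (D : Matrix n n ℂ) (u : l → ℂ) (v : n → ℂ) :
    star (Sum.elim u v) ⬝ᵥ fromBlocks A B C D *ᵥ Sum.elim u v =
      star u ⬝ᵥ (A *ᵥ u + B *ᵥ v) + star v ⬝ᵥ (C *ᵥ u + D *ᵥ v) := by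
  rw [Function.star_sumElim, fromBlocks_mulVec, sumElim_dotProduct_sumElim, Sum.elim_comp_inl,
    Sum.elim_comp_inr]

lemma numericalRange_toBlocks₁₁_subset (M : Matrix (l ⊕ n) (l ⊕ n) ℂ) :
    numericalRange M.toBlocks₁₁ ⊆ numericalRange M := by
  rintro _ ⟨u, hu, rfl⟩
  refine ⟨Sum.elim u 0, by simpa [Function.star_sumElim, sumElim_dotProduct_sumElim] using hu, ?_⟩
  rw [← fromBlocks_toBlocks M, star_sumElim_dotProduct_fromBlocks_mulVec]
  simp

lemma star_dotProduct_schur_mulVec [DecidableEq l] (A : Matrix l l ℂ) (B : Matrix l n ℂ)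
    (C : Matrix n l ℂ) (D : Matrix n n ℂ) (hA : IsUnit A) (v : n → ℂ) :
    star v ⬝ᵥ (D - C * A⁻¹ * B) *ᵥ v =
      star (Sum.elim (-(A⁻¹ *ᵥ B *ᵥ v)) v) ⬝ᵥ
        fromBlocks A B C D *ᵥ Sum.elim (-(A⁻¹ *ᵥ B *ᵥ v)) v := by
  have hAA : A * A⁻¹ = 1 := mul_nonsing_inv A ((isUnit_iff_isUnit_det A).mp hA)
  rw [star_sumElim_dotProduct_fromBlocks_mulVec, mulVec_neg, mulVec_mulVec (B *ᵥ v) A, hAA,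
    one_mulVec, neg_add_cancel, dotProduct_zero, zero_add, sub_mulVec, mulVec_neg,
    ← mulVec_mulVec, ← mulVec_mulVec, neg_add_eq_sub]

end Blocks

theorem schur_numericalRange_subset_general {p q : ℕ} (α : ℝ)
    (A : Matrix (Fin p ⊕ Fin q) (Fin p ⊕ Fin q) ℂ) (hA : numericalRange A ⊆ sector α) :
    IsUnit A.toBlocks₁₁ ∧ numericalRange (schur A) ⊆ sector α := by
  have hA₁₁ : IsUnit A.toBlocks₁₁ :=
    isUnit_of_numericalRange_subset_sector ((numericalRange_toBlocks₁₁_subset A).trans hA)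
  refine ⟨hA₁₁, ?_⟩
  rintro _ ⟨v, hv, rfl⟩
  have hv0 : v ≠ 0 := by rintro rfl; simp at hv
  rw [schur, star_dotProduct_schur_mulVec _ _ _ _ hA₁₁, fromBlocks_toBlocks]
  exact dotProduct_mulVec_mem_sector hA fun h => hv0 (by simpa using congrArg (· ∘ Sum.inr) h)

theorem schur_numericalRange_subset {p q : ℕ} (α : ℝ) (hα : α ∈ Set.Ico 0 (Real.pi / 2))
    (A : Matrix (Fin p ⊕ Fin q) (Fin p ⊕ Fin q) ℂ) (hA : numericalRange A ⊆ sector α) :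
    IsUnit A.toBlocks₁₁ ∧ numericalRange (schur A) ⊆ sector α :=
  schur_numericalRange_subset_general α A hA
end

section
/- Let a_0 = b_0 = 1 and a_k, b_k > 0 for k = 1, …, n. Then ∏_{k=1}^n (a_k/a_{k−1} + b_k/b_{k−1}) ≥ a_n(1 + ∑_{s=1}^{n−1} b_s/a_s) + b_n(1 + ∑_{s=1}^{n−1} a_s/b_s) + (2^n − 2n)√(a_n b_n). -/
/-!
Induction on `n`. Multiplying the bound for `n` by the next factor
`a_{n+1}/a_n + b_{n+1}/b_n` reproduces the `a_{n+1}` and `b_{n+1}` terms of the bound for `n + 1`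
exactly. The remaining cross terms come in pairs whose product is `a_{n+1} b_{n+1}`: one pair for
each of the `n - 1` summands, and one from `√(a_n b_n)` with weight `2^n - 2n ≥ 0`. AM-GM bounds
each pair below by `2 √(a_{n+1} b_{n+1})`, and `2 (2^n - 2n) + 2 (n - 1) = 2^{n+1} - 2(n+1)`.
-/

open Finset Real

lemma two_mul_sqrt_le_add_of_mul_eq {x y z : ℝ} (hx : 0 ≤ x) (hy : 0 ≤ y) (h : x * y = z) :
    2 * √z ≤ x + y := by
  subst h
  rw [sqrt_mul hx]
  nlinarith [sq_nonneg (√x - √y), sq_sqrt hx, sq_sqrt hy]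

lemma two_mul_card_mul_sqrt_le {ι : Type*} (S : Finset ι) {p q : ℝ} (hp : 0 ≤ p) (hq : 0 ≤ q)
    {f g : ι → ℝ} (hf : ∀ i ∈ S, 0 < f i) (hg : ∀ i ∈ S, 0 < g i) :
    2 * #S * √(p * q) ≤ p * ∑ i ∈ S, g i / f i + q * ∑ i ∈ S, f i / g i := by
  rw [mul_sum, mul_sum, ← sum_add_distrib, mul_comm 2, mul_assoc, ← nsmul_eq_mul, ← sum_const]
  refine sum_le_sum fun i hi => ?_
  have := hf i hi
  have := hg i hi
  exact two_mul_sqrt_le_add_of_mul_eq (by positivity) (by positivity) (by field_simp)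

/-- One inductive step, for `A = a_n`, `A' = a_{n+1}`, `X = ∑_{s<n} b_s / a_s`, and so on. -/
lemma bound_succ_le_mul {A B A' B' X Y c m : ℝ} (hA : 0 < A) (hB : 0 < B) (hA' : 0 < A')
    (hB' : 0 < B') (hc : 0 ≤ c) (hXY : 2 * m * √(A' * B') ≤ A * B' / B * X + B * A' / A * Y) :
    A' * (1 + (X + B / A)) + B' * (1 + (Y + A / B)) + (2 * c + 2 * m) * √(A' * B') ≤
      (A * (1 + X) + B * (1 + Y) + c * √(A * B)) * (A' / A + B' / B) := by
  have hamgm : 2 * √(A' * B') ≤ √(A * B) * A' / A + √(A * B) * B' / B := by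
    refine two_mul_sqrt_le_add_of_mul_eq (by positivity) (by positivity) ?_
    field_simp
    exact sq_sqrt (by positivity)
  have hexpand : (A * (1 + X) + B * (1 + Y) + c * √(A * B)) * (A' / A + B' / B) =
      A' * (1 + (X + B / A)) + B' * (1 + (Y + A / B)) +
        (A * B' / B * X + B * A' / A * Y + c * (√(A * B) * A' / A + √(A * B) * B' / B)) := by
    field_simp
    ring
  rw [hexpand]
  nlinarith [mul_le_mul_of_nonneg_left hamgm hc]

lemma two_mul_le_two_pow_of_one_le {n : ℕ} (hn : 1 ≤ n) : 2 * (n : ℝ) ≤ 2 ^ n := by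
  obtain ⟨m, rfl⟩ := Nat.exists_eq_add_of_le' hn
  have : (m + 1 : ℝ) ≤ 2 ^ m := by exact_mod_cast Nat.lt_two_pow_self
  rw [pow_succ]
  push_cast
  linarith

theorem bound_le_prod_div_add_div (m : ℕ) (a b : ℕ → ℝ) (ha0 : a 0 = 1) (hb0 : b 0 = 1)
    (ha : ∀ k, 1 ≤ k → k ≤ m + 1 → 0 < a k) (hb : ∀ k, 1 ≤ k → k ≤ m + 1 → 0 < b k) :
    a (m + 1) * (1 + ∑ s ∈ Icc 1 m, b s / a s) + b (m + 1) * (1 + ∑ s ∈ Icc 1 m, a s / b s) +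
        ((2 : ℝ) ^ (m + 1) - 2 * (m + 1 : ℕ)) * √(a (m + 1) * b (m + 1)) ≤
      ∏ k ∈ Icc 1 (m + 1), (a k / a (k - 1) + b k / b (k - 1)) := by
  induction m with
  | zero => simp [ha0, hb0]
  | succ m ih =>
    have ha_prev k (h1 : 1 ≤ k) (h2 : k ≤ m + 1) : 0 < a k := ha k h1 (by omega)
    have hb_prev k (h1 : 1 ≤ k) (h2 : k ≤ m + 1) : 0 < b k := hb k h1 (by omega)
    have hA := ha (m + 1) (by omega) (by omega)
    have hB := hb (m + 1) (by omega) (by omega)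
    have hA' := ha (m + 2) (by omega) (by omega)
    have hB' := hb (m + 2) (by omega) (by omega)
    have hsums := two_mul_card_mul_sqrt_le (Icc 1 m)
      (p := a (m + 1) * b (m + 2) / b (m + 1)) (q := b (m + 1) * a (m + 2) / a (m + 1))
      (by positivity) (by positivity)
      (fun i hi => ha_prev i (mem_Icc.1 hi).1 ((mem_Icc.1 hi).2.trans m.le_succ))
      (fun i hi => hb_prev i (mem_Icc.1 hi).1 ((mem_Icc.1 hi).2.trans m.le_succ))
    have hpq : a (m + 1) * b (m + 2) / b (m + 1) * (b (m + 1) * a (m + 2) / a (m + 1)) =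
        a (m + 2) * b (m + 2) := by
      field_simp
    rw [hpq, Nat.card_Icc, Nat.add_sub_cancel] at hsums
    have hc := two_mul_le_two_pow_of_one_le (Nat.le_add_left 1 m)
    rw [prod_Icc_succ_top (by omega), sum_Icc_succ_top (by omega), sum_Icc_succ_top (by omega)]
    have hcoef : (2 : ℝ) ^ (m + 1 + 1) - 2 * (m + 1 + 1 : ℕ) =
        2 * (2 ^ (m + 1) - 2 * (m + 1 : ℕ)) + 2 * m := by
      push_cast
      ring
    rw [hcoef]
    exact (bound_succ_le_mul hA hB hA' hB' (sub_nonneg.2 hc) hsums).trans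
      (mul_le_mul_of_nonneg_right (ih ha_prev hb_prev) (by positivity))

theorem claim2 (n : ℕ) (hn : 1 ≤ n) (a b : ℕ → ℝ) (ha0 : a 0 = 1) (hb0 : b 0 = 1)
    (ha : ∀ k, 1 ≤ k → k ≤ n → 0 < a k) (hb : ∀ k, 1 ≤ k → k ≤ n → 0 < b k) :
    a n * (1 + ∑ s ∈ Finset.Icc 1 (n - 1), b s / a s) +
      b n * (1 + ∑ s ∈ Finset.Icc 1 (n - 1), a s / b s) +
      ((2 : ℝ) ^ n - 2 * n) * Real.sqrt (a n * b n) ≤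
    ∏ k ∈ Finset.Icc 1 n, (a k / a (k - 1) + b k / b (k - 1)) := by
  obtain ⟨m, rfl⟩ := Nat.exists_eq_add_of_le' hn
  simpa using bound_le_prod_div_add_div m a b ha0 hb0 ha hb
end

section
/- For positive reals x_1, …, x_n: ∏_{k=1}^n (1 + x_k) ≥ 1 + ∑_{s=1}^n x_1 x_2 ⋯ x_s + ∑_{s=2}^n x_s x_{s+1} ⋯ x_n + (2^n − 2n) √(x_1 x_2 ⋯ x_n). -/
/-!
Expanding, `∏ (1 + x k) = ∑_{S ⊆ {1,…,n}} ∏_{k ∈ S} x k`. The `2n` subsets that are empty, an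
initial segment `{1,…,s}` or a final segment `{s,…,n}` with `s ≥ 2` give the left-hand side
without its square-root term. The remaining `2^n - 2n` subsets are closed under complementation
in `{1,…,n}`, and AM–GM on each pair `S`, `Sᶜ` gives `∏_S x + ∏_{Sᶜ} x ≥ 2 √(x₁ ⋯ xₙ)`.
-/

open Finset

lemma two_mul_sqrt_mul_le_add {a b : ℝ} (ha : 0 ≤ a) (hb : 0 ≤ b) :
    2 * √(a * b) ≤ a + b := by
  rw [Real.sqrt_mul ha]
  nlinarith [sq_nonneg (√a - √b), Real.sq_sqrt ha, Real.sq_sqrt hb]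

lemma card_mul_sqrt_prod_le_sum_prod {ι : Type*} [DecidableEq ι] {N : Finset ι}
    {B : Finset (Finset ι)} (hB : ∀ S ∈ B, S ⊆ N ∧ N \ S ∈ B) {x : ι → ℝ}
    (hx : ∀ i ∈ N, 0 ≤ x i) :
    #B * √(∏ i ∈ N, x i) ≤ ∑ S ∈ B, ∏ i ∈ S, x i := by
  have hx_prod : ∀ S ⊆ N, 0 ≤ ∏ i ∈ S, x i := fun S hS => prod_nonneg fun i hi => hx i (hS hi)
  have hpair : ∀ S ∈ B, 2 * √(∏ i ∈ N, x i) ≤ (∏ i ∈ S, x i) + ∏ i ∈ N \ S, x i := by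
    intro S hS
    rw [← prod_sdiff (hB S hS).1, mul_comm (∏ i ∈ N \ S, x i)]
    exact two_mul_sqrt_mul_le_add (hx_prod S (hB S hS).1) (hx_prod _ sdiff_subset)
  have hcompl : ∑ S ∈ B, ∏ i ∈ N \ S, x i = ∑ S ∈ B, ∏ i ∈ S, x i :=
    sum_nbij' (N \ ·) (N \ ·) (fun S hS => (hB S hS).2) (fun S hS => (hB S hS).2)
      (fun S hS => Finset.sdiff_sdiff_eq_self (hB S hS).1)
      (fun S hS => Finset.sdiff_sdiff_eq_self (hB S hS).1)
      (fun _ _ => rfl)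
  have := sum_le_sum hpair
  rw [sum_add_distrib, hcompl, sum_const, nsmul_eq_mul] at this
  linarith

def segments (n : ℕ) : Finset (Finset ℕ) :=
  insert ∅ ((Icc 1 n).image (Icc 1 ·) ∪ (Icc 2 n).image (Icc · n))

lemma mem_segments {n : ℕ} {S : Finset ℕ} :
    S ∈ segments n ↔
      S = ∅ ∨ (∃ s, 1 ≤ s ∧ s ≤ n ∧ S = Icc 1 s) ∨ ∃ s, 2 ≤ s ∧ s ≤ n ∧ S = Icc s n := by
  simp only [segments, mem_insert, mem_union, mem_image, mem_Icc, and_assoc, eq_comm]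

lemma segments_subset_powerset (n : ℕ) : segments n ⊆ (Icc 1 n).powerset := by
  intro S hS
  rw [mem_powerset]
  rcases mem_segments.1 hS with rfl | ⟨s, -, hs, rfl⟩ | ⟨s, hs, -, rfl⟩
  · exact empty_subset _
  · exact Icc_subset_Icc le_rfl hs
  · exact Icc_subset_Icc (by omega) le_rfl

lemma Icc_one_sdiff_Icc_one (n s : ℕ) : Icc 1 n \ Icc 1 s = Icc (s + 1) n := by
  ext k; simp only [mem_sdiff, mem_Icc]; omega

lemma Icc_one_sdiff_Icc_right {n s : ℕ} (hs : 1 ≤ s) (hsn : s ≤ n + 1) :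
    Icc 1 n \ Icc s n = Icc 1 (s - 1) := by
  ext k; simp only [mem_sdiff, mem_Icc]; omega

lemma sdiff_mem_segments {n : ℕ} {S : Finset ℕ} (hS : S ∈ segments n) :
    Icc 1 n \ S ∈ segments n := by
  rw [mem_segments]
  rcases mem_segments.1 hS with rfl | ⟨s, hs1, hsn, rfl⟩ | ⟨s, hs2, hsn, rfl⟩
  · rw [sdiff_empty]
    rcases Nat.eq_zero_or_pos n with rfl | hn
    · exact Or.inl rfl
    · exact Or.inr (Or.inl ⟨n, hn, le_rfl, rfl⟩)
  · rw [Icc_one_sdiff_Icc_one]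
    rcases hsn.eq_or_lt with rfl | hsn
    · exact Or.inl (Icc_eq_empty (by omega))
    · exact Or.inr (Or.inr ⟨s + 1, by omega, hsn, rfl⟩)
  · rw [Icc_one_sdiff_Icc_right (by omega) (by omega)]
    exact Or.inr (Or.inl ⟨s - 1, by omega, by omega, rfl⟩)

lemma sdiff_mem_powerset_sdiff_segments {n : ℕ} {S : Finset ℕ}
    (hS : S ∈ (Icc 1 n).powerset \ segments n) :
    Icc 1 n \ S ∈ (Icc 1 n).powerset \ segments n := by
  rw [mem_sdiff, mem_powerset] at hS ⊢
  refine ⟨sdiff_subset, fun h => hS.2 ?_⟩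
  simpa only [Finset.sdiff_sdiff_eq_self hS.1] using sdiff_mem_segments h

lemma Icc_injOn_right {α : Type*} [PartialOrder α] [LocallyFiniteOrder α] (a : α) :
    Set.InjOn (Icc a) (Set.Ici a) := fun _ hb _ hc h =>
  le_antisymm (mem_Icc.1 (h ▸ right_mem_Icc.2 hb)).2 (mem_Icc.1 (h ▸ right_mem_Icc.2 hc)).2

lemma Icc_injOn_left {α : Type*} [PartialOrder α] [LocallyFiniteOrder α] (b : α) :
    Set.InjOn (Icc · b) (Set.Iic b) := fun _ ha _ hc (h : Icc _ b = Icc _ b) =>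
  le_antisymm (mem_Icc.1 (h ▸ left_mem_Icc.2 hc)).1 (mem_Icc.1 (h ▸ left_mem_Icc.2 ha)).1

lemma sum_segments {M : Type*} [AddCommMonoid M] (n : ℕ) (f : Finset ℕ → M) :
    ∑ S ∈ segments n, f S =
      f ∅ + ∑ s ∈ Icc 1 n, f (Icc 1 s) + ∑ s ∈ Icc 2 n, f (Icc s n) := by
  have hdisj : Disjoint ((Icc 1 n).image (Icc 1 ·)) ((Icc 2 n).image (Icc · n)) := by
    simp only [disjoint_left, mem_image, mem_Icc, not_exists, not_and]
    rintro _ ⟨s, hs, rfl⟩ t ht h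
    have : 1 ∈ Icc t n := h ▸ mem_Icc.2 ⟨le_rfl, hs.1⟩
    exact absurd (mem_Icc.1 this).1 (by omega)
  have hempty : ∅ ∉ (Icc 1 n).image (Icc 1 ·) ∪ (Icc 2 n).image (Icc · n) := by
    simp only [mem_union, mem_image, mem_Icc, Icc_eq_empty_iff, not_or, not_exists, not_and]
    exact ⟨fun s hs => by omega, fun s hs => by omega⟩
  rw [segments, sum_insert hempty, sum_union hdisj, add_assoc,
    sum_image fun a ha b hb h => Icc_injOn_right 1 (mem_Icc.1 ha).1 (mem_Icc.1 hb).1 h,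
    sum_image fun a ha b hb h => Icc_injOn_left n (mem_Icc.1 ha).2 (mem_Icc.1 hb).2 h]

lemma card_segments {n : ℕ} (hn : 1 ≤ n) : #(segments n) = 2 * n := by
  rw [card_eq_sum_ones, sum_segments, sum_const, sum_const, Nat.card_Icc, Nat.card_Icc]
  simp only [smul_eq_mul, mul_one]
  omega

theorem prod_one_add_ge (n : ℕ) (hn : 1 ≤ n) (x : ℕ → ℝ)
    (hx : ∀ k, 1 ≤ k → k ≤ n → 0 < x k) :
    1 + ∑ s ∈ Finset.Icc 1 n, ∏ k ∈ Finset.Icc 1 s, x k +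
      ∑ s ∈ Finset.Icc 2 n, ∏ k ∈ Finset.Icc s n, x k +
      ((2 : ℝ) ^ n - 2 * n) * Real.sqrt (∏ k ∈ Finset.Icc 1 n, x k) ≤
    ∏ k ∈ Finset.Icc 1 n, (1 + x k) := by
  have hAMGM := card_mul_sqrt_prod_le_sum_prod
    (fun S hS => ⟨mem_powerset.1 (mem_sdiff.1 hS).1, sdiff_mem_powerset_sdiff_segments hS⟩)
    fun k hk => (hx k (mem_Icc.1 hk).1 (mem_Icc.1 hk).2).le
  rw [cast_card_sdiff (segments_subset_powerset n), card_powerset, card_segments hn,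
    Nat.card_Icc, Nat.add_sub_cancel] at hAMGM
  rw [prod_one_add, ← sum_sdiff (segments_subset_powerset n), sum_segments, prod_empty]
  push_cast at hAMGM
  linarith
end
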